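/- arXiv:1307.6208 — 2 statements merged into one kernel-verified Lean document; each statement's English description precedes it below -/
import Mathlib

section
/- Let r, t be sequences of nonzero reals, s a sequence with s₀ ≠ 0, and (D_k) the reciprocal coefficients of s. For j ∈ ℕ define b^{(j)} ∈ ℝ^ℕ by b^{(j)}_n = ∑_{k=0}^{n−j} (−1)^k (D_k / t_{k+j}) r_j if j ≤ n and 0 if j > n. Then (b^{(j)})_{j≥0} is a Schauder basis of c₀(r,s,t;Δ): every x ∈ c₀(r,s,t;Δ) has a unique representation x = ∑_{j=0}^{∞} μ_j b^{(j)} converging in the norm of c₀(r,s,t;Δ), where μ_j = (1/r_j) ∑_{k=0}^{j} s_{j−k} t_k (x_k − x_{k−1}). -/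
/-!
The transform `T x = (1/r_n) ∑ s_{n-k} t_k Δx_k` is linear, and the backward difference of
`b^{(j)}` is `(-1)^{k-j} D_{k-j} r_j / t_k` for `k ≥ j`; convolving it with `s` gives the
Kronecker delta by the defining relation of `D`, so `T b^{(j)} = e_j`. Hence
`T (x - ∑_{j ≤ m} μ_j b^{(j)})` is `T x` minus `μ` truncated at `m`, and the norm of the error is
`sup_n |(T x)_n - μ_n 1_{n ≤ m}|`. For `μ = T x` this is the tail supremum of a null sequence;
conversely it dominates `|(T x)_n - μ_n|` as soon as `m ≥ n`, which forces `μ = T x`.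
-/

open Finset Filter Topology

noncomputable section

def backwardDiff : (ℕ → ℝ) →ₗ[ℝ] ℕ → ℝ where
  toFun x k := x k - if k = 0 then 0 else x (k - 1)
  map_add' x y := by
    ext k
    simp only [Pi.add_apply]
    split_ifs <;> ring
  map_smul' c x := by
    ext k
    simp only [Pi.smul_apply, smul_eq_mul, RingHom.id_apply]
    split_ifs <;> ring

theorem backwardDiff_apply (x : ℕ → ℝ) (k : ℕ) :
    backwardDiff x k = x k - if k = 0 then 0 else x (k - 1) := rfl

def rstTransform (r s t : ℕ → ℝ) : (ℕ → ℝ) →ₗ[ℝ] ℕ → ℝ where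
  toFun x n := (1 / r n) * ∑ k ∈ range (n + 1), s (n - k) * t k * backwardDiff x k
  map_add' x y := by
    ext n
    simp only [map_add, Pi.add_apply, mul_add, sum_add_distrib]
  map_smul' c x := by
    ext n
    simp only [map_smul, Pi.smul_apply, smul_eq_mul, RingHom.id_apply, mul_sum]
    congr 1; ext k; ring

theorem rstTransform_apply (r s t x : ℕ → ℝ) (n : ℕ) :
    rstTransform r s t x n = (1 / r n) * ∑ k ∈ range (n + 1), s (n - k) * t k * backwardDiff x k :=
  rfl

def basisSeq (r t D : ℕ → ℝ) (j n : ℕ) : ℝ :=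
  if j ≤ n then ∑ k ∈ range (n - j + 1), (-1 : ℝ) ^ k * (D k / t (k + j)) * r j else 0

end

theorem LinearMap.apply_sub_sum_of_apply_eq_single (L : (ℕ → ℝ) →ₗ[ℝ] ℕ → ℝ) {b : ℕ → ℕ → ℝ}
    (hb : ∀ j, L (b j) = Pi.single j 1) (x μ : ℕ → ℝ) (m n : ℕ) :
    L (x - fun k => ∑ j ∈ Finset.range (m + 1), μ j * b j k) n =
      L x n - if n ≤ m then μ n else 0 := by
  have hsum : (fun k => ∑ j ∈ Finset.range (m + 1), μ j * b j k) =
      ∑ j ∈ Finset.range (m + 1), μ j • b j := by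
    ext k; simp
  rw [hsum, map_sub, map_sum]
  simp [hb, Pi.single_apply]

theorem basisSeq_prev (r t D : ℕ → ℝ) (j k : ℕ) :
    (if k = 0 then 0 else basisSeq r t D j (k - 1)) =
      ∑ i ∈ range (k - j), (-1 : ℝ) ^ i * (D i / t (i + j)) * r j := by
  rcases Nat.lt_or_ge j k with h | h
  · rw [if_neg (by omega), basisSeq, if_pos (by omega), show k - 1 - j + 1 = k - j by omega]
  · rw [Nat.sub_eq_zero_of_le h, sum_range_zero]
    split_ifs with hk
    · rfl
    · exact if_neg (by omega)

theorem backwardDiff_basisSeq (r t D : ℕ → ℝ) (j k : ℕ) :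
    backwardDiff (basisSeq r t D j) k =
      if j ≤ k then (-1 : ℝ) ^ (k - j) * D (k - j) * r j / t k else 0 := by
  rw [backwardDiff_apply, basisSeq_prev, basisSeq]
  split_ifs with h
  · rw [sum_range_succ, add_sub_cancel_left, Nat.sub_add_cancel h]
    ring
  · rw [Nat.sub_eq_zero_of_le (by omega), sum_range_zero, sub_zero]

theorem sum_neg_one_pow_mul_mul_eq_ite {s D : ℕ → ℝ} (hs : s 0 ≠ 0) (hD0 : D 0 = 1 / s 0)
    (hD : ∀ n : ℕ, 1 ≤ n → (∑ k ∈ range (n + 1), (-1 : ℝ) ^ k * D k * s (n - k)) = 0) (n : ℕ) :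
    ∑ k ∈ range (n + 1), (-1 : ℝ) ^ k * D k * s (n - k) = if n = 0 then 1 else 0 := by
  rcases Nat.eq_zero_or_pos n with rfl | hn
  · simp [hD0, hs]
  · rw [hD n hn, if_neg hn.ne']

theorem rstTransform_basisSeq {r s t D : ℕ → ℝ} (hr : ∀ n, r n ≠ 0) (ht : ∀ n, t n ≠ 0)
    (hs : s 0 ≠ 0) (hD0 : D 0 = 1 / s 0)
    (hD : ∀ n : ℕ, 1 ≤ n → (∑ k ∈ range (n + 1), (-1 : ℝ) ^ k * D k * s (n - k)) = 0) (j : ℕ) :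
    rstTransform r s t (basisSeq r t D j) = Pi.single j 1 := by
  ext n
  have hterm : ∀ k, s (n - k) * t k * backwardDiff (basisSeq r t D j) k =
      if j ≤ k then r j * ((-1 : ℝ) ^ (k - j) * D (k - j) * s (n - k)) else 0 := by
    intro k
    rw [backwardDiff_basisSeq]
    split_ifs
    · field_simp [ht k]
    · rw [mul_zero]
  rw [rstTransform_apply, sum_congr rfl fun k _ => hterm k, Pi.single_apply]
  by_cases hjn : j ≤ n
  · -- only the indices `k = j + i` with `i ≤ n - j` contribute
    rw [show n + 1 = j + (n - j + 1) by omega, sum_range_add,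
      sum_eq_zero fun k hk => if_neg (by simpa using hk)]
    simp only [le_add_iff_nonneg_right, zero_le, if_true, Nat.add_sub_cancel_left,
      Nat.sub_add_eq, zero_add]
    rw [← mul_sum, sum_neg_one_pow_mul_mul_eq_ite hs hD0 hD]
    rcases hjn.eq_or_lt with rfl | hlt
    · simp [hr j]
    · simp [Nat.sub_eq_zero_iff_le, hlt.not_ge, hlt.ne']
  · rw [sum_eq_zero fun k hk => if_neg (by simp at hk; omega), mul_zero, if_neg (by omega)]

section SupTruncation

variable {y : ℕ → ℝ}

theorem tendsto_iSup_abs_sub_truncation (hy : Tendsto y atTop (𝓝 0)) :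
    Tendsto (fun m => ⨆ n, |y n - if n ≤ m then y n else 0|) atTop (𝓝 0) := by
  rw [Metric.tendsto_atTop]
  intro ε hε
  obtain ⟨M, hM⟩ := Metric.tendsto_atTop.mp hy (ε / 2) (half_pos hε)
  refine ⟨M, fun m hm => ?_⟩
  have hle : ⨆ n, |y n - if n ≤ m then y n else 0| ≤ ε / 2 := by
    refine Real.iSup_le (fun n => ?_) (half_pos hε).le
    split_ifs with hn
    · simpa using (half_pos hε).le
    · simpa using (hM n (by omega)).le
  rw [Real.dist_eq, sub_zero, abs_of_nonneg (Real.iSup_nonneg fun n => abs_nonneg _)]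
  linarith

theorem eq_of_tendsto_iSup_abs_sub_truncation (hy : Tendsto y atTop (𝓝 0)) {μ : ℕ → ℝ}
    (hμ : Tendsto (fun m => ⨆ n, |y n - if n ≤ m then μ n else 0|) atTop (𝓝 0)) :
    μ = y := by
  funext n
  have hbound : ∀ m, n ≤ m → |y n - μ n| ≤ ⨆ k, |y k - if k ≤ m then μ k else 0| := by
    intro m hm
    -- beyond `m` the truncated difference is `y`, so it is bounded and `le_ciSup` applies
    have htail : Tendsto (fun k => y k - if k ≤ m then μ k else 0) atTop (𝓝 0) := by
      refine hy.congr' ?_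
      filter_upwards [eventually_gt_atTop m] with k hk
      rw [if_neg (by omega), sub_zero]
    have habs : Tendsto (fun k => |y k - if k ≤ m then μ k else 0|) atTop (𝓝 0) := by
      simpa using htail.abs
    simpa [hm] using le_ciSup habs.bddAbove_range n
  have h := ge_of_tendsto hμ (eventually_atTop.mpr ⟨n, hbound⟩)
  exact (sub_eq_zero.mp (abs_nonpos_iff.mp h)).symm

end SupTruncation

/-- The sequences `b^{(j)}` form a Schauder basis of `c₀(r,s,t;Δ)`: every `x` has
a unique norm-convergent expansion `x = ∑_j μ_j b^{(j)}` with `μ_j = (T x)_j`. -/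
theorem stmt_6 (r s t D : ℕ → ℝ) (hr : ∀ n, r n ≠ 0) (ht : ∀ n, t n ≠ 0)
    (hs : s 0 ≠ 0) (hD0 : D 0 = 1 / s 0)
    (hD : ∀ n : ℕ, 1 ≤ n →
      (∑ k ∈ Finset.range (n + 1), (-1 : ℝ) ^ k * D k * s (n - k)) = 0) :
    let T : (ℕ → ℝ) → ℕ → ℝ := fun x n =>
      (1 / r n) * ∑ k ∈ Finset.range (n + 1),
        s (n - k) * t k * (x k - if k = 0 then 0 else x (k - 1))
    let X0 : Set (ℕ → ℝ) := {x | Filter.Tendsto (T x) Filter.atTop (nhds 0)}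
    let N : (ℕ → ℝ) → ℝ := fun x => ⨆ n, |T x n|
    let b : ℕ → ℕ → ℝ := fun j n =>
      if j ≤ n then ∑ k ∈ Finset.range (n - j + 1), (-1 : ℝ) ^ k * (D k / t (k + j)) * r j
      else 0
    ∀ x ∈ X0,
      Filter.Tendsto
        (fun m => N (x - (fun n => ∑ j ∈ Finset.range (m + 1), T x j * b j n)))
        Filter.atTop (nhds 0) ∧
      (∀ μ : ℕ → ℝ,
        Filter.Tendsto
          (fun m => N (x - (fun n => ∑ j ∈ Finset.range (m + 1), μ j * b j n)))
          Filter.atTop (nhds 0) → μ = T x) := by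
  intro T X0 N b x hx
  have hN : ∀ (μ : ℕ → ℝ) m, N (x - fun n => ∑ j ∈ Finset.range (m + 1), μ j * b j n) =
      ⨆ n, |T x n - if n ≤ m then μ n else 0| := fun μ m =>
    congrArg iSup <| funext fun n => congrArg abs <|
      (rstTransform r s t).apply_sub_sum_of_apply_eq_single
        (rstTransform_basisSeq hr ht hs hD0 hD) x μ m n
  refine ⟨?_, fun μ hμ => ?_⟩
  · simpa only [hN] using tendsto_iSup_abs_sub_truncation hx
  · exact eq_of_tendsto_iSup_abs_sub_truncation hx (by simpa only [hN] using hμ)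
end

section
/- Let A = (a_{nk}) be an infinite real matrix. Then A maps c₀ into ℓ₁ (i.e., for every null sequence x, ∑_k a_{nk} x_k converges for each n and ∑_n |∑_k a_{nk} x_k| < ∞) if and only if sup over all nonempty finite sets K ⊂ ℕ of ∑_{n=0}^{∞} |∑_{k∈K} a_{nk}| is finite. -/
/-! Everything rests on one elementary fact: if every sub-sum of a finite family of reals is at
most `C` in absolute value, then so is half its absolute sum (split by sign).

For `⇐`, applied to column sums over any set of rows, it bounds `|∑ₙ∈S ∑ₖ∈K aₙₖ xₖ|` by
`2 C sup |x|`, applied once more to these row sums it bounds `∑ₙ |∑ₖ∈K aₙₖ xₖ|` by `4 C sup |x|`,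
and `K = range m → ∞` gives the claim.

For `⇒`, the rows act as functionals on the Banach space `c₀ = C₀(ℕ, ℝ)`. Since summability in `ℝ`
is absolute, the uniform boundedness principle applied to the finite sums of a pointwise summable
family of functionals bounds `∑ₙ |fₙ x|` uniformly on the unit ball. Tested on indicators of
finite sets, this shows first that each row is in `ℓ¹` (family of coordinate functionals), and
then, for the family of rows, the required bound. -/

open Filter Finset Topology
open scoped ZeroAtInfty

theorem sum_abs_le_two_mul_of_forall_subset {ι : Type*} (b : ι → ℝ) (K : Finset ι) {C : ℝ}
    (h : ∀ K' ⊆ K, |∑ k ∈ K', b k| ≤ C) : ∑ k ∈ K, |b k| ≤ 2 * C := by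
  have hpos := abs_le.mp (h (K.filter fun k => 0 ≤ b k) (filter_subset _ _))
  have hneg := abs_le.mp (h (K.filter fun k => ¬0 ≤ b k) (filter_subset _ _))
  have hsplit : ∑ k ∈ K, |b k| = ∑ k ∈ K.filter (fun k => 0 ≤ b k), b k
      - ∑ k ∈ K.filter (fun k => ¬0 ≤ b k), b k := by
    rw [← sum_filter_add_sum_filter_not K (fun k => 0 ≤ b k),
      sum_congr rfl fun k hk => abs_of_nonneg (mem_filter.mp hk).2,
      sum_congr rfl fun k hk => abs_of_neg (not_le.mp (mem_filter.mp hk).2),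
      sum_neg_distrib, sub_eq_add_neg]
  linarith

theorem exists_sum_abs_apply_le_of_summable {E ι : Type*} [NormedAddCommGroup E]
    [NormedSpace ℝ E] [CompleteSpace E] (f : ι → E →L[ℝ] ℝ)
    (hf : ∀ x, Summable fun i => f i x) :
    ∃ C, ∀ x, ‖x‖ ≤ 1 → ∀ T : Finset ι, ∑ i ∈ T, |f i x| ≤ C := by
  have hbdd : ∀ x, ∃ C, ∀ S : Finset ι, ‖(∑ i ∈ S, f i) x‖ ≤ C := fun x =>
    ⟨∑' i, |f i x|, fun S => calc
      ‖(∑ i ∈ S, f i) x‖ ≤ ∑ i ∈ S, |f i x| := by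
        simpa only [_root_.sum_apply, Real.norm_eq_abs] using abs_sum_le_sum_abs _ _
      _ ≤ ∑' i, |f i x| := (hf x).abs.sum_le_tsum _ fun i _ => abs_nonneg _⟩
  obtain ⟨C, hC⟩ := banach_steinhaus hbdd
  refine ⟨2 * C, fun x hx T => sum_abs_le_two_mul_of_forall_subset _ T fun S _ => ?_⟩
  calc |∑ i ∈ S, f i x| = ‖(∑ i ∈ S, f i) x‖ := by
        rw [_root_.sum_apply, Real.norm_eq_abs]
    _ ≤ ‖∑ i ∈ S, f i‖ * ‖x‖ := (∑ i ∈ S, f i).le_opNorm x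
    _ ≤ C * 1 := mul_le_mul (hC S) hx (norm_nonneg x) ((norm_nonneg _).trans (hC S))
    _ = C := mul_one C

namespace ZeroAtInftyContinuousMap

theorem tendsto_atTop_nat (g : C₀(ℕ, ℝ)) : Tendsto g atTop (𝓝 0) :=
  cocompact_eq_atTop (α := ℕ) ▸ g.zero_at_infty'

theorem abs_apply_le_norm (g : C₀(ℕ, ℝ)) (k : ℕ) : |g k| ≤ ‖g‖ :=
  g.toBCF.norm_coe_le_norm k

noncomputable def evalCLM (k : ℕ) : C₀(ℕ, ℝ) →L[ℝ] ℝ :=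
  LinearMap.mkContinuous
    { toFun := fun g => g k
      map_add' := fun _ _ => rfl
      map_smul' := fun _ _ => rfl }
    1 fun g => by simpa using g.abs_apply_le_norm k

@[simp] theorem evalCLM_apply (k : ℕ) (g : C₀(ℕ, ℝ)) : evalCLM k g = g k := rfl

noncomputable def finsetIndicator (K : Finset ℕ) : C₀(ℕ, ℝ) where
  toFun := (K : Set ℕ).indicator 1
  continuous_toFun := continuous_of_discreteTopology
  zero_at_infty' := by
    rw [cocompact_eq_cofinite]
    refine tendsto_nhds_of_eventually_eq ?_
    filter_upwards [K.finite_toSet.compl_mem_cofinite] with k hk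
    exact Set.indicator_of_notMem hk _

@[simp] theorem finsetIndicator_apply (K : Finset ℕ) (k : ℕ) :
    finsetIndicator K k = (K : Set ℕ).indicator 1 k := rfl

theorem norm_finsetIndicator_le (K : Finset ℕ) : ‖finsetIndicator K‖ ≤ 1 := by
  rw [← norm_toBCF_eq_norm, BoundedContinuousFunction.norm_le zero_le_one]
  intro k
  by_cases hk : k ∈ K <;> simp [hk]

end ZeroAtInftyContinuousMap

open ZeroAtInftyContinuousMap

theorem summable_abs_of_forall_summable_mul (c : ℕ → ℝ)
    (h : ∀ g : C₀(ℕ, ℝ), Summable fun k => c k * g k) : Summable fun k => |c k| := by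
  obtain ⟨C, hC⟩ := exists_sum_abs_apply_le_of_summable (fun k => c k • evalCLM k)
    (by simpa using h)
  refine summable_of_sum_le (c := C) (fun k => abs_nonneg _) fun T => ?_
  refine le_of_eq_of_le (sum_congr rfl fun k hk => ?_) (hC _ (norm_finsetIndicator_le T) T)
  simp [hk]

theorem summable_mul_of_summable_abs {c : ℕ → ℝ} (hc : Summable fun k => |c k|) {x : ℕ → ℝ}
    {M : ℝ} (hx : ∀ k, |x k| ≤ M) : Summable fun k => c k * x k :=
  (hc.mul_right M).of_norm_bounded fun k => by
    rw [Real.norm_eq_abs, abs_mul]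
    exact mul_le_mul_of_nonneg_left (hx k) (abs_nonneg _)

theorem abs_tsum_mul_le {c : ℕ → ℝ} (hc : Summable fun k => |c k|) {x : ℕ → ℝ} {M : ℝ}
    (hx : ∀ k, |x k| ≤ M) : |∑' k, c k * x k| ≤ (∑' k, |c k|) * M := by
  have hs : Summable fun k => |c k * x k| := (summable_mul_of_summable_abs hc hx).abs
  calc |∑' k, c k * x k| ≤ ∑' k, |c k * x k| :=
        norm_tsum_le_tsum_norm (f := fun k => c k * x k) hs
    _ ≤ ∑' k, |c k| * M := hs.tsum_le_tsum (fun k => by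
        rw [abs_mul]; exact mul_le_mul_of_nonneg_left (hx k) (abs_nonneg _)) (hc.mul_right M)
    _ = (∑' k, |c k|) * M := tsum_mul_right

noncomputable def tsumMulCLM (c : ℕ → ℝ) (hc : Summable fun k => |c k|) :
    C₀(ℕ, ℝ) →L[ℝ] ℝ :=
  LinearMap.mkContinuous
    { toFun := fun g => ∑' k, c k * g k
      map_add' := fun g h => by
        simp only [ZeroAtInftyContinuousMap.coe_add, Pi.add_apply, mul_add]
        exact (summable_mul_of_summable_abs hc g.abs_apply_le_norm).tsum_add
          (summable_mul_of_summable_abs hc h.abs_apply_le_norm)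
      map_smul' := fun r g => by
        simp only [ZeroAtInftyContinuousMap.coe_smul, smul_eq_mul, RingHom.id_apply,
          ← tsum_mul_left]
        exact tsum_congr fun k => mul_left_comm _ _ _ }
    (∑' k, |c k|) fun g => abs_tsum_mul_le hc g.abs_apply_le_norm

theorem tsumMulCLM_apply {c : ℕ → ℝ} (hc : Summable fun k => |c k|) (g : C₀(ℕ, ℝ)) :
    tsumMulCLM c hc g = ∑' k, c k * g k := rfl

theorem exists_sum_abs_sum_le_of_summable (a : ℕ → ℕ → ℝ)
    (h : ∀ g : C₀(ℕ, ℝ),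
      (∀ n, Summable fun k => a n k * g k) ∧ Summable fun n => |∑' k, a n k * g k|) :
    ∃ C, ∀ K T : Finset ℕ, ∑ n ∈ T, |∑ k ∈ K, a n k| ≤ C := by
  have hrow n : Summable fun k => |a n k| :=
    summable_abs_of_forall_summable_mul (a n) fun g => (h g).1 n
  obtain ⟨C, hC⟩ := exists_sum_abs_apply_le_of_summable (fun n => tsumMulCLM (a n) (hrow n))
    fun g => by simpa only [tsumMulCLM_apply] using (h g).2.of_abs
  refine ⟨C, fun K T => le_of_eq_of_le (sum_congr rfl fun n _ => ?_)
    (hC _ (norm_finsetIndicator_le K) T)⟩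
  rw [tsumMulCLM_apply, tsum_eq_sum (s := K) fun k hk => by simp [hk]]
  exact congrArg _ (sum_congr rfl fun k hk => by simp [hk])

theorem abs_sum_sum_mul_le {ι κ : Type*} (a : ι → κ → ℝ) (x : κ → ℝ) (S : Finset ι)
    (K : Finset κ) {C M : ℝ} (hC : ∀ K' ⊆ K, ∑ n ∈ S, |∑ k ∈ K', a n k| ≤ C)
    (hx : ∀ k ∈ K, |x k| ≤ M) (hM : 0 ≤ M) :
    |∑ n ∈ S, ∑ k ∈ K, a n k * x k| ≤ 2 * C * M := by
  have hcol : ∑ k ∈ K, |∑ n ∈ S, a n k| ≤ 2 * C :=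
    sum_abs_le_two_mul_of_forall_subset _ K fun K' hK' => by
      rw [sum_comm]
      exact (abs_sum_le_sum_abs _ _).trans (hC K' hK')
  calc |∑ n ∈ S, ∑ k ∈ K, a n k * x k| = |∑ k ∈ K, (∑ n ∈ S, a n k) * x k| := by
        simp only [sum_comm (s := S), sum_mul]
    _ ≤ ∑ k ∈ K, |∑ n ∈ S, a n k| * M := by
        refine (abs_sum_le_sum_abs _ _).trans (sum_le_sum fun k hk => ?_)
        rw [abs_mul]
        exact mul_le_mul_of_nonneg_left (hx k hk) (abs_nonneg _)
    _ ≤ 2 * C * M := by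
        rw [← sum_mul]
        exact mul_le_mul_of_nonneg_right hcol hM

theorem sum_abs_sum_mul_le {ι κ : Type*} (a : ι → κ → ℝ) (x : κ → ℝ) (T : Finset ι)
    (K : Finset κ) {C M : ℝ} (hC : ∀ K' ⊆ K, ∑ n ∈ T, |∑ k ∈ K', a n k| ≤ C)
    (hx : ∀ k ∈ K, |x k| ≤ M) (hM : 0 ≤ M) :
    ∑ n ∈ T, |∑ k ∈ K, a n k * x k| ≤ 4 * C * M := by
  have := sum_abs_le_two_mul_of_forall_subset _ T fun S hS =>
    abs_sum_sum_mul_le a x S K (fun K' hK' =>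
      (sum_le_sum_of_subset_of_nonneg hS fun _ _ _ => abs_nonneg _).trans (hC K' hK')) hx hM
  linarith

theorem summable_abs_tsum_mul_of_forall_sum_abs_sum_le (a : ℕ → ℕ → ℝ) {C M : ℝ}
    (hC : ∀ (K : Finset ℕ) (N : ℕ), ∑ n ∈ range N, |∑ k ∈ K, a n k| ≤ C)
    {x : ℕ → ℝ} (hx : ∀ k, |x k| ≤ M) :
    (∀ n, Summable fun k => a n k * x k) ∧ Summable fun n => |∑' k, a n k * x k| := by
  have hM : 0 ≤ M := (abs_nonneg _).trans (hx 0)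
  have hrow n : Summable fun k => |a n k| := by
    refine summable_of_sum_le (c := 2 * C) (fun k => abs_nonneg _) fun K =>
      sum_abs_le_two_mul_of_forall_subset _ K fun K' _ => ?_
    exact (single_le_sum (fun m _ => abs_nonneg (∑ k ∈ K', a m k)) (self_mem_range_succ n)).trans
      (hC K' (n + 1))
  have hsum n : Summable fun k => a n k * x k := summable_mul_of_summable_abs (hrow n) hx
  refine ⟨hsum, summable_of_sum_range_le (c := 4 * C * M) (fun n => abs_nonneg _) fun N => ?_⟩
  refine le_of_tendsto (tendsto_finsetSum _ fun n _ => ((hsum n).hasSum.tendsto_sum_nat).abs)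
    (Eventually.of_forall fun m => ?_)
  exact sum_abs_sum_mul_le a x _ _ (fun K' _ => hC K' N) (fun k _ => hx k) hM

/-- `A ∈ (c₀, ℓ₁)` iff `sup_{K finite nonempty} ∑_n |∑_{k ∈ K} a_{nk}| < ∞`. -/
theorem stmt_14 (a : ℕ → ℕ → ℝ) :
    (∀ x : ℕ → ℝ, Filter.Tendsto x Filter.atTop (nhds 0) →
      (∀ n, Summable fun k => a n k * x k) ∧
      Summable fun n => |∑' k, a n k * x k|) ↔
    (∃ C, ∀ K : Finset ℕ, K.Nonempty →
      ∀ N : ℕ, ∑ n ∈ Finset.range N, |∑ k ∈ K, a n k| ≤ C) := by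
  constructor
  · intro h
    obtain ⟨C, hC⟩ := exists_sum_abs_sum_le_of_summable a fun g => h g g.tendsto_atTop_nat
    exact ⟨C, fun K _ N => hC K (range N)⟩
  · rintro ⟨C, hC⟩ x hx
    have hC_nonneg : 0 ≤ C := by simpa using hC {0} (singleton_nonempty 0) 0
    have hC' (K : Finset ℕ) (N : ℕ) : ∑ n ∈ range N, |∑ k ∈ K, a n k| ≤ C := by
      rcases K.eq_empty_or_nonempty with rfl | hK
      · simpa using hC_nonneg
      · exact hC K hK N
    obtain ⟨M, hM⟩ := (Metric.isBounded_range_of_tendsto x hx).exists_norm_le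
    exact summable_abs_tsum_mul_of_forall_sum_abs_sum_le a hC' fun k => hM _ ⟨k, rfl⟩
end
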